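/- Let Λ be a discrete index set and ω an index distance on Λ which is (w₁,w₂,p₀,K)-admissible with constants C₁, C₂. If A ∈ ℂ^{Λ×Λ} is N-localized with respect to ω for some N ≥ K, then the matrix operator (Aa)_λ := Σ_{λ'} A_{λ,λ'} a_{λ'} is bounded from ℓ^p_{w₁}(Λ) to ℓ^p_{w₂}(Λ) for all p ∈ [p₀,∞], with operator norm at most C₁^{1/p} C₂^{1/p'} ‖A‖_{𝓑_N} for p ∈ [1,∞] (where 1/p + 1/p' = 1) and at most C₁ ‖A‖_{𝓑_N} for p ∈ (p₀,1]. -/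

import Mathlib

/-!
Since `|A_{λλ'}| ≤ ‖A‖_{𝓑_N} ω(λ,λ')^{-N} ≤ ‖A‖_{𝓑_N} ω(λ,λ')^{-K}`, the kernel
`k = diag(w₂) |A| diag(w₁)⁻¹` has column `p`-sums at most `(C₁ ‖A‖_{𝓑_N})^p` for every `p ≥ p₀`
(first admissibility condition together with `ℓ^{p₀} ⊆ ℓ^p`) and row sums at most
`C₂ ‖A‖_{𝓑_N}` (second condition). For `p ≤ 1` the `p`-triangle inequality `(∑ x)^p ≤ ∑ x^p`
bounds `ℓ^p → ℓ^p` by the column `p`-sums alone; for `p ≥ 1` Schur's test (Hölder on each row)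
combines row and column sums; for `p = ∞` the row sums suffice. The estimates are carried out in
`ℝ≥0∞`, where the double sums can be exchanged without summability bookkeeping.
-/

open scoped ENNReal

namespace ENNReal

variable {ι κ : Type*}

theorem rpow_finsetSum_le_sum_rpow (s : Finset ι) (f : ι → ℝ≥0∞) {p : ℝ} (hp : 0 < p)
    (hp1 : p ≤ 1) : (∑ i ∈ s, f i) ^ p ≤ ∑ i ∈ s, f i ^ p := by
  induction s using Finset.cons_induction with
  | empty => simp [zero_rpow_of_pos hp]
  | cons a s _ ih =>
    rw [Finset.sum_cons, Finset.sum_cons]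
    exact (rpow_add_le_add_rpow _ _ hp.le hp1).trans (by gcongr)

theorem rpow_tsum_le_tsum_rpow (f : ι → ℝ≥0∞) {p : ℝ} (hp : 0 < p) (hp1 : p ≤ 1) :
    (∑' i, f i) ^ p ≤ ∑' i, f i ^ p := by
  rw [← le_rpow_inv_iff hp, ENNReal.tsum_eq_iSup_sum]
  exact iSup_le fun s => (le_rpow_inv_iff hp).2 <|
    (rpow_finsetSum_le_sum_rpow s f hp hp1).trans (ENNReal.sum_le_tsum s)

theorem tsum_rpow_le_rpow_tsum (f : ι → ℝ≥0∞) {q : ℝ} (hq : 1 ≤ q) :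
    ∑' i, f i ^ q ≤ (∑' i, f i) ^ q := by
  have hq₀ : 0 < q := zero_lt_one.trans_le hq
  rw [← rpow_inv_le_iff hq₀]
  simpa [rpow_rpow_inv hq₀.ne'] using
    rpow_tsum_le_tsum_rpow (fun i => f i ^ q) (inv_pos.2 hq₀) (inv_le_one_of_one_le₀ hq)

theorem tsum_rpow_le_of_tsum_rpow_le (f : ι → ℝ≥0∞) {p q : ℝ} (hp : 0 < p) (hpq : p ≤ q)
    {B : ℝ≥0∞} (h : ∑' i, f i ^ p ≤ B ^ p) : ∑' i, f i ^ q ≤ B ^ q := by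
  have hqp : p * (q / p) = q := by field_simp
  calc ∑' i, f i ^ q = ∑' i, (f i ^ p) ^ (q / p) := by simp only [← rpow_mul, hqp]
    _ ≤ (∑' i, f i ^ p) ^ (q / p) := tsum_rpow_le_rpow_tsum _ ((one_le_div hp).2 hpq)
    _ ≤ (B ^ p) ^ (q / p) := by gcongr; exact div_nonneg (hp.le.trans hpq) hp.le
    _ = B ^ q := by rw [← rpow_mul, hqp]

theorem inner_le_weight_mul_Lp_tsum {p : ℝ} (hp : 1 ≤ p) (w f : ι → ℝ≥0∞) :
    ∑' i, w i * f i ≤ (∑' i, w i) ^ (1 - p⁻¹) * (∑' i, w i * f i ^ p) ^ p⁻¹ := by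
  have hp' : 0 ≤ 1 - p⁻¹ := sub_nonneg.2 (inv_le_one_of_one_le₀ hp)
  rw [ENNReal.tsum_eq_iSup_sum]
  refine iSup_le fun s => (inner_le_weight_mul_Lp_of_nonneg s hp w f).trans ?_
  gcongr <;> exact ENNReal.sum_le_tsum s

theorem rpow_tsum_mul_le {p : ℝ} (hp : 1 ≤ p) (w f : ι → ℝ≥0∞) :
    (∑' i, w i * f i) ^ p ≤ (∑' i, w i) ^ (p - 1) * ∑' i, w i * f i ^ p := by
  have hp₀ : 0 < p := zero_lt_one.trans_le hp
  calc (∑' i, w i * f i) ^ p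
      ≤ ((∑' i, w i) ^ (1 - p⁻¹) * (∑' i, w i * f i ^ p) ^ p⁻¹) ^ p :=
        rpow_le_rpow (inner_le_weight_mul_Lp_tsum hp w f) hp₀.le
    _ = (∑' i, w i) ^ (p - 1) * ∑' i, w i * f i ^ p := by
        rw [mul_rpow_of_nonneg _ _ hp₀.le, ← rpow_mul, rpow_inv_rpow hp₀.ne']
        congr 2
        field_simp

theorem tsum_rpow_tsum_mul_le_of_le_one {k : ι → κ → ℝ≥0∞} {p : ℝ} (hp : 0 < p) (hp1 : p ≤ 1)
    {B : ℝ≥0∞} (hk : ∀ j, ∑' i, k i j ^ p ≤ B) (f : κ → ℝ≥0∞) :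
    ∑' i, (∑' j, k i j * f j) ^ p ≤ B * ∑' j, f j ^ p := by
  calc ∑' i, (∑' j, k i j * f j) ^ p
      ≤ ∑' i, ∑' j, (k i j * f j) ^ p :=
        ENNReal.tsum_le_tsum fun i => rpow_tsum_le_tsum_rpow _ hp hp1
    _ = ∑' j, (∑' i, k i j ^ p) * f j ^ p := by
        rw [ENNReal.tsum_comm]
        simp only [mul_rpow_of_nonneg _ _ hp.le, ENNReal.tsum_mul_right]
    _ ≤ ∑' j, B * f j ^ p := by gcongr with j; exact hk j
    _ = B * ∑' j, f j ^ p := ENNReal.tsum_mul_left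

/-- **Schur's test** on `ℓ^p`, `1 ≤ p < ∞`. -/
theorem tsum_rpow_tsum_mul_le_of_one_le {k : ι → κ → ℝ≥0∞} {p : ℝ} (hp : 1 ≤ p)
    {R S : ℝ≥0∞} (hrow : ∀ i, ∑' j, k i j ≤ R) (hcol : ∀ j, ∑' i, k i j ≤ S) (f : κ → ℝ≥0∞) :
    ∑' i, (∑' j, k i j * f j) ^ p ≤ R ^ (p - 1) * S * ∑' j, f j ^ p := by
  calc ∑' i, (∑' j, k i j * f j) ^ p
      ≤ ∑' i, R ^ (p - 1) * ∑' j, k i j * f j ^ p := by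
        gcongr with i
        exact (rpow_tsum_mul_le hp _ _).trans (by gcongr; exact hrow i)
    _ = R ^ (p - 1) * ∑' j, (∑' i, k i j) * f j ^ p := by
        rw [ENNReal.tsum_mul_left, ENNReal.tsum_comm]
        simp only [ENNReal.tsum_mul_right]
    _ ≤ R ^ (p - 1) * ∑' j, S * f j ^ p := by gcongr with j; exact hcol j
    _ = R ^ (p - 1) * S * ∑' j, f j ^ p := by rw [ENNReal.tsum_mul_left, mul_assoc]

end ENNReal

theorem summable_and_tsum_rpow_le_of_ofReal {ι : Type*} {g x : ι → ℝ} (hg : ∀ i, 0 ≤ g i)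
    (hx : ∀ i, 0 ≤ x i) {p D : ℝ} (hp : 0 < p) (hD : 0 ≤ D)
    (hxs : Summable fun i => x i ^ p)
    (h : ∑' i, ENNReal.ofReal (g i) ^ p ≤ ENNReal.ofReal D * ∑' i, ENNReal.ofReal (x i) ^ p) :
    Summable (fun i => g i ^ p) ∧
      (∑' i, g i ^ p) ^ (1 / p) ≤ D ^ (1 / p) * (∑' i, x i ^ p) ^ (1 / p) := by
  have hgp : ∀ i, 0 ≤ g i ^ p := fun i => Real.rpow_nonneg (hg i) p
  have hxp : ∀ i, 0 ≤ x i ^ p := fun i => Real.rpow_nonneg (hx i) p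
  simp only [ENNReal.ofReal_rpow_of_nonneg (hg _) hp.le, ENNReal.ofReal_rpow_of_nonneg (hx _) hp.le,
    ← ENNReal.ofReal_tsum_of_nonneg hxp hxs, ← ENNReal.ofReal_mul hD] at h
  have hgs : Summable fun i => g i ^ p := by
    simpa only [ENNReal.toReal_ofReal (hgp _)] using
      ENNReal.summable_toReal (ne_top_of_le_ne_top ENNReal.ofReal_ne_top h)
  refine ⟨hgs, ?_⟩
  rw [← ENNReal.ofReal_tsum_of_nonneg hgp hgs,
    ENNReal.ofReal_le_ofReal_iff (mul_nonneg hD (tsum_nonneg hxp))] at h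
  rw [← Real.mul_rpow hD (tsum_nonneg hxp)]
  exact Real.rpow_le_rpow (tsum_nonneg hgp) h (by positivity)

section LocalizedMatrix

variable {Λ : Type*}

/-- `ω` is `(w₁,w₂,p₀,K)`-admissible with constants `C₁, C₂` iff it is `ColumnAdmissible` with
`C₁` and `RowAdmissible` with `C₂`. -/
def ColumnAdmissible (ω : Λ → Λ → ℝ) (w₁ w₂ : Λ → ℝ) (p₀ K C₁ : ℝ) : Prop :=
  ∀ j, Summable (fun i => w₂ i ^ p₀ * ω i j ^ (-(p₀ * K))) ∧
    ∑' i, w₂ i ^ p₀ * ω i j ^ (-(p₀ * K)) ≤ C₁ ^ p₀ * w₁ j ^ p₀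

def RowAdmissible (ω : Λ → Λ → ℝ) (w₁ w₂ : Λ → ℝ) (K C₂ : ℝ) : Prop :=
  ∀ i, Summable (fun j => ω i j ^ (-K) * (w₁ j)⁻¹) ∧ ∑' j, ω i j ^ (-K) * (w₁ j)⁻¹ ≤ C₂ * (w₂ i)⁻¹

/-- `‖A‖_{𝓑_K} ≤ CA`. -/
def IsLocalized (ω : Λ → Λ → ℝ) (A : Λ → Λ → ℂ) (K CA : ℝ) : Prop :=
  ∀ i j, ‖A i j‖ ≤ CA * ω i j ^ (-K)

noncomputable def weightedKernel (w₁ w₂ : Λ → ℝ) (A : Λ → Λ → ℂ) (i j : Λ) : ℝ≥0∞ :=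
  ENNReal.ofReal (w₂ i * ‖A i j‖ / w₁ j)

variable {ω : Λ → Λ → ℝ} {w₁ w₂ : Λ → ℝ} {A : Λ → Λ → ℂ} {K N CA : ℝ}

theorem IsLocalized.mono (hω1 : ∀ i j, 1 ≤ ω i j) (hNK : K ≤ N) (hCA : 0 ≤ CA)
    (hA : IsLocalized ω A N CA) : IsLocalized ω A K CA := fun i j =>
  (hA i j).trans <| mul_le_mul_of_nonneg_left
    (Real.rpow_le_rpow_of_exponent_le (hω1 i j) (neg_le_neg hNK)) hCA

theorem weightedKernel_mul_ofReal (hw₁ : ∀ j, 0 < w₁ j) (hw₂ : ∀ i, 0 ≤ w₂ i) (a : Λ → ℂ)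
    (i j : Λ) : weightedKernel w₁ w₂ A i j * ENNReal.ofReal (‖a j‖ * w₁ j) =
      ENNReal.ofReal (w₂ i) * ‖A i j * a j‖ₑ := by
  rw [weightedKernel,
    ← ENNReal.ofReal_mul (div_nonneg (mul_nonneg (hw₂ i) (norm_nonneg _)) (hw₁ j).le),
    ← ofReal_norm, ← ENNReal.ofReal_mul (hw₂ i), norm_mul]
  congr 1
  field_simp [(hw₁ j).ne']

theorem ofReal_norm_tsum_mul_le (hw₁ : ∀ j, 0 < w₁ j) (hw₂ : ∀ i, 0 ≤ w₂ i) (a : Λ → ℂ)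
    (i : Λ) : ENNReal.ofReal (‖∑' j, A i j * a j‖ * w₂ i) ≤
      ∑' j, weightedKernel w₁ w₂ A i j * ENNReal.ofReal (‖a j‖ * w₁ j) := by
  simp only [weightedKernel_mul_ofReal hw₁ hw₂, ENNReal.tsum_mul_left]
  rw [ENNReal.ofReal_mul (norm_nonneg _), ofReal_norm, mul_comm]
  gcongr
  exact enorm_tsum_le_tsum_enorm

theorem summable_mul_of_tsum_weightedKernel_ne_top (hw₁ : ∀ j, 0 < w₁ j)
    (hw₂ : ∀ i, 0 < w₂ i) {a : Λ → ℂ} {i : Λ}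
    (h : ∑' j, weightedKernel w₁ w₂ A i j * ENNReal.ofReal (‖a j‖ * w₁ j) ≠ ⊤) :
    Summable fun j => A i j * a j := by
  simp only [weightedKernel_mul_ofReal hw₁ (fun i => (hw₂ i).le), ENNReal.tsum_mul_left] at h
  refine Summable.of_norm (tsum_enorm_ne_top_iff_summable_norm.1 fun htop => h ?_)
  rw [htop, ENNReal.mul_top (ENNReal.ofReal_pos.2 (hw₂ i)).ne']

theorem weightedKernel_le (hw₁ : ∀ j, 0 < w₁ j) (hw₂ : ∀ i, 0 < w₂ i)
    (hA : IsLocalized ω A K CA) (i j : Λ) :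
    weightedKernel w₁ w₂ A i j ≤ ENNReal.ofReal (w₂ i * (CA * ω i j ^ (-K)) / w₁ j) := by
  have := hw₂ i
  have := hw₁ j
  unfold weightedKernel
  gcongr
  exact hA i j

theorem tsum_weightedKernel_le (hω : ∀ i j, 0 ≤ ω i j) (hw₁ : ∀ j, 0 < w₁ j)
    (hw₂ : ∀ i, 0 < w₂ i) {C₂ : ℝ}
    (hadm₂ : RowAdmissible ω w₁ w₂ K C₂)
    (hCA : 0 ≤ CA) (hA : IsLocalized ω A K CA) (i : Λ) :
    ∑' j, weightedKernel w₁ w₂ A i j ≤ ENNReal.ofReal (C₂ * CA) := by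
  have hnonneg : ∀ j, 0 ≤ ω i j ^ (-K) * (w₁ j)⁻¹ := fun j =>
    mul_nonneg (Real.rpow_nonneg (hω i j) _) (inv_nonneg.2 (hw₁ j).le)
  calc ∑' j, weightedKernel w₁ w₂ A i j
      ≤ ∑' j, ENNReal.ofReal (w₂ i * CA * (ω i j ^ (-K) * (w₁ j)⁻¹)) := by
        gcongr with j
        refine (weightedKernel_le hw₁ hw₂ hA i j).trans_eq ?_
        rw [div_eq_mul_inv]
        ring_nf
    _ = ENNReal.ofReal (w₂ i * CA * ∑' j, ω i j ^ (-K) * (w₁ j)⁻¹) := by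
        rw [← ENNReal.ofReal_tsum_of_nonneg
          (fun j => mul_nonneg (mul_nonneg (hw₂ i).le hCA) (hnonneg j)) ((hadm₂ i).1.mul_left _),
          tsum_mul_left]
    _ ≤ ENNReal.ofReal (w₂ i * CA * (C₂ * (w₂ i)⁻¹)) := by
        gcongr
        · exact mul_nonneg (hw₂ i).le hCA
        · exact (hadm₂ i).2
    _ = ENNReal.ofReal (C₂ * CA) := by
        congr 1
        field_simp [(hw₂ i).ne']

theorem tsum_ofReal_rpow_le (hω : ∀ i j, 0 ≤ ω i j) (hw₁ : ∀ j, 0 < w₁ j)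
    (hw₂ : ∀ i, 0 < w₂ i) {p₀ C₁ : ℝ} (hp₀ : 0 < p₀) (hC₁ : 0 < C₁)
    (hadm₁ : ColumnAdmissible ω w₁ w₂ p₀ K C₁)
    {p : ℝ} (hp : p₀ ≤ p) (j : Λ) :
    ∑' i, ENNReal.ofReal (w₂ i * ω i j ^ (-K)) ^ p ≤ ENNReal.ofReal (C₁ * w₁ j) ^ p := by
  refine ENNReal.tsum_rpow_le_of_tsum_rpow_le _ hp₀ hp ?_
  have hterm : ∀ i, ENNReal.ofReal (w₂ i * ω i j ^ (-K)) ^ p₀ =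
      ENNReal.ofReal (w₂ i ^ p₀ * ω i j ^ (-(p₀ * K))) := fun i => by
    rw [ENNReal.ofReal_rpow_of_nonneg (mul_nonneg (hw₂ i).le (Real.rpow_nonneg (hω i j) _)) hp₀.le,
      Real.mul_rpow (hw₂ i).le (Real.rpow_nonneg (hω i j) _), ← Real.rpow_mul (hω i j), neg_mul,
      mul_comm K]
  rw [tsum_congr hterm, ← ENNReal.ofReal_tsum_of_nonneg (fun i => mul_nonneg
      (Real.rpow_nonneg (hw₂ i).le _) (Real.rpow_nonneg (hω i j) _)) (hadm₁ j).1,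
    ENNReal.ofReal_rpow_of_nonneg (mul_nonneg hC₁.le (hw₁ j).le) hp₀.le,
    Real.mul_rpow hC₁.le (hw₁ j).le]
  exact ENNReal.ofReal_le_ofReal (hadm₁ j).2

theorem tsum_weightedKernel_rpow_le (hω : ∀ i j, 0 ≤ ω i j) (hw₁ : ∀ j, 0 < w₁ j)
    (hw₂ : ∀ i, 0 < w₂ i) {p₀ C₁ : ℝ} (hp₀ : 0 < p₀) (hC₁ : 0 < C₁)
    (hadm₁ : ColumnAdmissible ω w₁ w₂ p₀ K C₁)
    (hCA : 0 ≤ CA) (hA : IsLocalized ω A K CA)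
    {p : ℝ} (hp : p₀ ≤ p) (j : Λ) :
    ∑' i, weightedKernel w₁ w₂ A i j ^ p ≤ ENNReal.ofReal (C₁ * CA) ^ p := by
  have hp' : 0 ≤ p := hp₀.le.trans hp
  have hCAw : 0 ≤ CA / w₁ j := div_nonneg hCA (hw₁ j).le
  calc ∑' i, weightedKernel w₁ w₂ A i j ^ p
      ≤ ∑' i, (ENNReal.ofReal (CA / w₁ j) * ENNReal.ofReal (w₂ i * ω i j ^ (-K))) ^ p := by
        gcongr with i
        refine (weightedKernel_le hw₁ hw₂ hA i j).trans_eq ?_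
        rw [← ENNReal.ofReal_mul hCAw]
        ring_nf
    _ = ENNReal.ofReal (CA / w₁ j) ^ p * ∑' i, ENNReal.ofReal (w₂ i * ω i j ^ (-K)) ^ p := by
        simp only [ENNReal.mul_rpow_of_nonneg _ _ hp', ENNReal.tsum_mul_left]
    _ ≤ ENNReal.ofReal (CA / w₁ j) ^ p * ENNReal.ofReal (C₁ * w₁ j) ^ p := by
        gcongr
        exact tsum_ofReal_rpow_le hω hw₁ hw₂ hp₀ hC₁ hadm₁ hp j
    _ = ENNReal.ofReal (C₁ * CA) ^ p := by
        rw [← ENNReal.mul_rpow_of_nonneg _ _ hp', ← ENNReal.ofReal_mul hCAw]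
        congr 2
        field_simp [(hw₁ j).ne']

theorem summable_and_ofReal_norm_tsum_mul_le (hω : ∀ i j, 0 ≤ ω i j) (hw₁ : ∀ j, 0 < w₁ j)
    (hw₂ : ∀ i, 0 < w₂ i) {C₂ : ℝ}
    (hadm₂ : RowAdmissible ω w₁ w₂ K C₂)
    (hCA : 0 ≤ CA) (hA : IsLocalized ω A K CA) {a : Λ → ℂ} {M : ℝ≥0∞}
    (hM : M ≠ ⊤) (ha : ∀ j, ENNReal.ofReal (‖a j‖ * w₁ j) ≤ M) (i : Λ) :
    Summable (fun j => A i j * a j) ∧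
      ENNReal.ofReal (‖∑' j, A i j * a j‖ * w₂ i) ≤ ENNReal.ofReal (C₂ * CA) * M := by
  have hle : ∑' j, weightedKernel w₁ w₂ A i j * ENNReal.ofReal (‖a j‖ * w₁ j) ≤
      ENNReal.ofReal (C₂ * CA) * M :=
    calc _ ≤ ∑' j, weightedKernel w₁ w₂ A i j * M := by gcongr with j; exact ha j
      _ ≤ ENNReal.ofReal (C₂ * CA) * M := by
        rw [ENNReal.tsum_mul_right]
        gcongr
        exact tsum_weightedKernel_le hω hw₁ hw₂ hadm₂ hCA hA i
  exact ⟨summable_mul_of_tsum_weightedKernel_ne_top hw₁ hw₂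
      (ne_top_of_le_ne_top (ENNReal.mul_ne_top ENNReal.ofReal_ne_top hM) hle),
    (ofReal_norm_tsum_mul_le hw₁ (fun i => (hw₂ i).le) a i).trans hle⟩

theorem summable_and_norm_tsum_mul_le (hω : ∀ i j, 0 ≤ ω i j) (hw₁ : ∀ j, 0 < w₁ j)
    (hw₂ : ∀ i, 0 < w₂ i) {C₂ : ℝ} (hC₂ : 0 < C₂)
    (hadm₂ : RowAdmissible ω w₁ w₂ K C₂)
    (hCA : 0 ≤ CA) (hA : IsLocalized ω A K CA) {a : Λ → ℂ} {M : ℝ}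
    (ha : ∀ j, ‖a j‖ * w₁ j ≤ M) (i : Λ) :
    Summable (fun j => A i j * a j) ∧ ‖∑' j, A i j * a j‖ * w₂ i ≤ C₂ * CA * M := by
  have hM : 0 ≤ M := (mul_nonneg (norm_nonneg _) (hw₁ i).le).trans (ha i)
  obtain ⟨hs, hle⟩ := summable_and_ofReal_norm_tsum_mul_le hω hw₁ hw₂ hadm₂ hCA hA
    ENNReal.ofReal_ne_top (fun j => ENNReal.ofReal_le_ofReal (ha j)) i
  rw [← ENNReal.ofReal_mul (mul_nonneg hC₂.le hCA),
    ENNReal.ofReal_le_ofReal_iff (mul_nonneg (mul_nonneg hC₂.le hCA) hM)] at hle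
  exact ⟨hs, hle⟩

theorem summable_mul_of_summable_rpow (hω : ∀ i j, 0 ≤ ω i j) (hw₁ : ∀ j, 0 < w₁ j)
    (hw₂ : ∀ i, 0 < w₂ i) {C₂ : ℝ}
    (hadm₂ : RowAdmissible ω w₁ w₂ K C₂)
    (hCA : 0 ≤ CA) (hA : IsLocalized ω A K CA) {p : ℝ} (hp : 0 < p)
    {a : Λ → ℂ} (ha : Summable fun j => (‖a j‖ * w₁ j) ^ p) (i : Λ) :
    Summable fun j => A i j * a j := by
  have hx : ∀ j, 0 ≤ ‖a j‖ * w₁ j := fun j => mul_nonneg (norm_nonneg _) (hw₁ j).le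
  set T := ∑' j, ENNReal.ofReal (‖a j‖ * w₁ j) ^ p
  have hT : T ≠ ⊤ := by
    simpa only [T, ENNReal.ofReal_rpow_of_nonneg (hx _) hp.le] using ha.tsum_ofReal_ne_top
  refine (summable_and_ofReal_norm_tsum_mul_le hω hw₁ hw₂ hadm₂ hCA hA
    (ENNReal.rpow_ne_top_of_nonneg (inv_nonneg.2 hp.le) hT) (fun j => ?_) i).1
  exact (ENNReal.le_rpow_inv_iff hp).2 (ENNReal.le_tsum j)

theorem summable_and_tsum_rpow_le_of_weightedKernel (hw₁ : ∀ j, 0 < w₁ j)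
    (hw₂ : ∀ i, 0 < w₂ i) {p D : ℝ} (hp : 0 < p) (hD : 0 ≤ D) {a : Λ → ℂ}
    (ha : Summable fun j => (‖a j‖ * w₁ j) ^ p)
    (hk : ∑' i, (∑' j, weightedKernel w₁ w₂ A i j * ENNReal.ofReal (‖a j‖ * w₁ j)) ^ p ≤
      ENNReal.ofReal D * ∑' j, ENNReal.ofReal (‖a j‖ * w₁ j) ^ p) :
    Summable (fun i => (‖∑' j, A i j * a j‖ * w₂ i) ^ p) ∧
      (∑' i, (‖∑' j, A i j * a j‖ * w₂ i) ^ p) ^ (1 / p) ≤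
        D ^ (1 / p) * (∑' j, (‖a j‖ * w₁ j) ^ p) ^ (1 / p) :=
  summable_and_tsum_rpow_le_of_ofReal (fun i => mul_nonneg (norm_nonneg _) (hw₂ i).le)
    (fun j => mul_nonneg (norm_nonneg _) (hw₁ j).le) hp hD ha <|
      (ENNReal.tsum_le_tsum fun i => ENNReal.rpow_le_rpow
        (ofReal_norm_tsum_mul_le hw₁ (fun i => (hw₂ i).le) a i) hp.le).trans hk

theorem summable_and_tsum_rpow_le_of_le_one (hω : ∀ i j, 0 ≤ ω i j) (hw₁ : ∀ j, 0 < w₁ j)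
    (hw₂ : ∀ i, 0 < w₂ i) {p₀ C₁ : ℝ} (hp₀ : 0 < p₀) (hC₁ : 0 < C₁)
    (hadm₁ : ColumnAdmissible ω w₁ w₂ p₀ K C₁)
    (hCA : 0 ≤ CA) (hA : IsLocalized ω A K CA) {p : ℝ} (hp : p₀ ≤ p)
    (hp1 : p ≤ 1) {a : Λ → ℂ} (ha : Summable fun j => (‖a j‖ * w₁ j) ^ p) :
    Summable (fun i => (‖∑' j, A i j * a j‖ * w₂ i) ^ p) ∧
      (∑' i, (‖∑' j, A i j * a j‖ * w₂ i) ^ p) ^ (1 / p) ≤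
        C₁ * CA * (∑' j, (‖a j‖ * w₁ j) ^ p) ^ (1 / p) := by
  have hp' : 0 < p := hp₀.trans_le hp
  have hC : 0 ≤ C₁ * CA := mul_nonneg hC₁.le hCA
  have hk := ENNReal.tsum_rpow_tsum_mul_le_of_le_one hp' hp1
    (tsum_weightedKernel_rpow_le hω hw₁ hw₂ hp₀ hC₁ hadm₁ hCA hA hp) fun j =>
      ENNReal.ofReal (‖a j‖ * w₁ j)
  rw [ENNReal.ofReal_rpow_of_nonneg hC hp'.le] at hk
  simpa only [one_div, Real.rpow_rpow_inv hC hp'.ne'] using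
    summable_and_tsum_rpow_le_of_weightedKernel hw₁ hw₂ hp' (Real.rpow_nonneg hC p) ha hk

theorem rpow_sub_one_mul_rpow_inv {p x y c : ℝ} (hp : 0 < p) (hx : 0 ≤ x) (hy : 0 ≤ y)
    (hc : 0 ≤ c) : ((y * c) ^ (p - 1) * (x * c)) ^ (1 / p) = x ^ (1 / p) * y ^ (1 - 1 / p) * c := by
  have hexp : (p - 1) * (1 / p) = 1 - 1 / p := by field_simp
  rw [Real.mul_rpow (Real.rpow_nonneg (mul_nonneg hy hc) _) (mul_nonneg hx hc),
    ← Real.rpow_mul (mul_nonneg hy hc), hexp, Real.mul_rpow hy hc, Real.mul_rpow hx hc]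
  calc y ^ (1 - 1 / p) * c ^ (1 - 1 / p) * (x ^ (1 / p) * c ^ (1 / p))
      = x ^ (1 / p) * y ^ (1 - 1 / p) * (c ^ (1 - 1 / p) * c ^ (1 / p)) := by ring
    _ = x ^ (1 / p) * y ^ (1 - 1 / p) * c := by
      rw [← Real.rpow_add' hc (by norm_num), sub_add_cancel, Real.rpow_one]

theorem summable_and_tsum_rpow_le_of_one_le (hω : ∀ i j, 0 ≤ ω i j) (hw₁ : ∀ j, 0 < w₁ j)
    (hw₂ : ∀ i, 0 < w₂ i) {p₀ C₁ C₂ : ℝ} (hp₀ : 0 < p₀) (hp₀1 : p₀ ≤ 1) (hC₁ : 0 < C₁)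
    (hC₂ : 0 < C₂)
    (hadm₁ : ColumnAdmissible ω w₁ w₂ p₀ K C₁)
    (hadm₂ : RowAdmissible ω w₁ w₂ K C₂)
    (hCA : 0 ≤ CA) (hA : IsLocalized ω A K CA) {p : ℝ} (hp : 1 ≤ p)
    {a : Λ → ℂ} (ha : Summable fun j => (‖a j‖ * w₁ j) ^ p) :
    Summable (fun i => (‖∑' j, A i j * a j‖ * w₂ i) ^ p) ∧
      (∑' i, (‖∑' j, A i j * a j‖ * w₂ i) ^ p) ^ (1 / p) ≤
        C₁ ^ (1 / p) * C₂ ^ (1 - 1 / p) * CA * (∑' j, (‖a j‖ * w₁ j) ^ p) ^ (1 / p) := by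
  have hp' : 0 < p := zero_lt_one.trans_le hp
  have hC₁' : 0 ≤ C₁ * CA := mul_nonneg hC₁.le hCA
  have hC₂' : 0 ≤ C₂ * CA := mul_nonneg hC₂.le hCA
  have hcol : ∀ j, ∑' i, weightedKernel w₁ w₂ A i j ≤ ENNReal.ofReal (C₁ * CA) := fun j => by
    simpa only [ENNReal.rpow_one] using
      tsum_weightedKernel_rpow_le hω hw₁ hw₂ hp₀ hC₁ hadm₁ hCA hA hp₀1 j
  have hk := ENNReal.tsum_rpow_tsum_mul_le_of_one_le hp
    (tsum_weightedKernel_le hω hw₁ hw₂ hadm₂ hCA hA) hcol fun j =>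
      ENNReal.ofReal (‖a j‖ * w₁ j)
  rw [ENNReal.ofReal_rpow_of_nonneg hC₂' (sub_nonneg.2 hp), ← ENNReal.ofReal_mul
    (Real.rpow_nonneg hC₂' _)] at hk
  rw [← rpow_sub_one_mul_rpow_inv hp' hC₁.le hC₂.le hCA]
  exact summable_and_tsum_rpow_le_of_weightedKernel hw₁ hw₂ hp'
    (mul_nonneg (Real.rpow_nonneg hC₂' _) hC₁') ha hk

end LocalizedMatrix

theorem stmt_5_general {Λ : Type*} (ω : Λ → Λ → ℝ)
    (hω1 : ∀ l l' : Λ, 1 ≤ ω l l')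
    (w₁ w₂ : Λ → ℝ) (hw₁ : ∀ l : Λ, 0 < w₁ l) (hw₂ : ∀ l : Λ, 0 < w₂ l)
    (p₀ K : ℝ) (hp₀ : 0 < p₀) (hp₀1 : p₀ ≤ 1)
    (C₁ C₂ : ℝ) (hC₁ : 0 < C₁) (hC₂ : 0 < C₂)
    (hadm₁ : ∀ l' : Λ, Summable (fun l : Λ => w₂ l ^ p₀ * ω l l' ^ (-(p₀ * K))) ∧
      ∑' l : Λ, w₂ l ^ p₀ * ω l l' ^ (-(p₀ * K)) ≤ C₁ ^ p₀ * w₁ l' ^ p₀)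
    (hadm₂ : ∀ l : Λ, Summable (fun l' : Λ => ω l l' ^ (-K) * (w₁ l')⁻¹) ∧
      ∑' l' : Λ, ω l l' ^ (-K) * (w₁ l')⁻¹ ≤ C₂ * (w₂ l)⁻¹)
    (N : ℝ) (hNK : K ≤ N)
    (A : Λ → Λ → ℂ) (CA : ℝ) (hCA : 0 ≤ CA)
    (hA : ∀ l l' : Λ, ‖A l l'‖ ≤ CA * ω l l' ^ (-N)) :
    -- boundedness for all finite `p ∈ [p₀,1]`, with some operator norm bound
    (∀ p : ℝ, p₀ ≤ p → p ≤ 1 → ∃ C : ℝ, ∀ a : Λ → ℂ,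
      Summable (fun l : Λ => (‖a l‖ * w₁ l) ^ p) →
        (∀ l : Λ, Summable (fun l' : Λ => A l l' * a l')) ∧
        Summable (fun l : Λ => (‖∑' l' : Λ, A l l' * a l'‖ * w₂ l) ^ p) ∧
        (∑' l : Λ, (‖∑' l' : Λ, A l l' * a l'‖ * w₂ l) ^ p) ^ (1 / p) ≤
          C * (∑' l : Λ, (‖a l‖ * w₁ l) ^ p) ^ (1 / p)) ∧
    -- operator norm at most `C₁ ‖A‖_{𝓑_N}` for `p ∈ (p₀,1]`
    (∀ p : ℝ, p₀ < p → p ≤ 1 → ∀ a : Λ → ℂ,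
      Summable (fun l : Λ => (‖a l‖ * w₁ l) ^ p) →
        (∑' l : Λ, (‖∑' l' : Λ, A l l' * a l'‖ * w₂ l) ^ p) ^ (1 / p) ≤
          C₁ * CA * (∑' l : Λ, (‖a l‖ * w₁ l) ^ p) ^ (1 / p)) ∧
    -- operator norm at most `C₁^{1/p} C₂^{1/p'} ‖A‖_{𝓑_N}` for finite `p ∈ [1,∞)`
    (∀ p : ℝ, 1 ≤ p → ∀ a : Λ → ℂ,
      Summable (fun l : Λ => (‖a l‖ * w₁ l) ^ p) →
        (∀ l : Λ, Summable (fun l' : Λ => A l l' * a l')) ∧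
        Summable (fun l : Λ => (‖∑' l' : Λ, A l l' * a l'‖ * w₂ l) ^ p) ∧
        (∑' l : Λ, (‖∑' l' : Λ, A l l' * a l'‖ * w₂ l) ^ p) ^ (1 / p) ≤
          C₁ ^ (1 / p) * C₂ ^ (1 - 1 / p) * CA *
            (∑' l : Λ, (‖a l‖ * w₁ l) ^ p) ^ (1 / p)) ∧
    -- the case `p = ∞`, with norm `C₂ ‖A‖_{𝓑_N}`
    (∀ a : Λ → ℂ, ∀ Ca : ℝ, (∀ l : Λ, ‖a l‖ * w₁ l ≤ Ca) →
      (∀ l : Λ, Summable (fun l' : Λ => A l l' * a l')) ∧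
      ∀ l : Λ, ‖∑' l' : Λ, A l l' * a l'‖ * w₂ l ≤ C₂ * CA * Ca) := by
  have hω : ∀ l l', 0 ≤ ω l l' := fun l l' => zero_le_one.trans (hω1 l l')
  have hAK : IsLocalized ω A K CA := IsLocalized.mono hω1 hNK hCA hA
  have hrows {p : ℝ} (hp : 0 < p) {a : Λ → ℂ} (ha : Summable fun l => (‖a l‖ * w₁ l) ^ p) :=
    summable_mul_of_summable_rpow hω hw₁ hw₂ hadm₂ hCA hAK hp ha
  have hsmall {p : ℝ} (hp : p₀ ≤ p) (hp1 : p ≤ 1) {a : Λ → ℂ}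
      (ha : Summable fun l => (‖a l‖ * w₁ l) ^ p) :=
    summable_and_tsum_rpow_le_of_le_one hω hw₁ hw₂ hp₀ hC₁ hadm₁ hCA hAK hp hp1 ha
  refine ⟨fun p hp hp1 => ⟨C₁ * CA, fun a ha =>
      ⟨hrows (hp₀.trans_le hp) ha, hsmall hp hp1 ha⟩⟩,
    fun p hp hp1 a ha => (hsmall hp.le hp1 ha).2,
    fun p hp a ha => ⟨hrows (zero_lt_one.trans_le hp) ha,
      summable_and_tsum_rpow_le_of_one_le hω hw₁ hw₂ hp₀ hp₀1 hC₁ hC₂ hadm₁ hadm₂ hCA hAK hp ha⟩,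
    fun a Ca ha => ?_⟩
  have hbound := summable_and_norm_tsum_mul_le hω hw₁ hw₂ hC₂ hadm₂ hCA hAK ha
  exact ⟨fun l => (hbound l).1, fun l => (hbound l).2⟩

/-- If `ω` is a `(w₁,w₂,p₀,K)`-admissible index distance (constants `C₁, C₂`) and `A` is
`N`-localized with respect to `ω` for some `N ≥ K` (with localization constant `CA`,
standing for `‖A‖_{𝓑_N}`), then `A` maps `ℓ^p_{w₁}(Λ)` boundedly to `ℓ^p_{w₂}(Λ)` for
all `p ∈ [p₀,∞]`, with operator norm at most `C₁^{1/p} C₂^{1/p'} ‖A‖_{𝓑_N}` for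
`p ∈ [1,∞]` and at most `C₁ ‖A‖_{𝓑_N}` for `p ∈ (p₀,1]`. -/
theorem stmt_5 {Λ : Type*} (ω : Λ → Λ → ℝ) (C_S C_T : ℝ)
    (hω1 : ∀ l l' : Λ, 1 ≤ ω l l')
    (hdiag : ∀ l : Λ, ω l l = 1)
    (hCS : 1 ≤ C_S) (hCT : 1 ≤ C_T)
    (hsym : ∀ l l' : Λ, ω l l' ≤ C_S * ω l' l)
    (htri : ∀ l l' l'' : Λ, ω l l' ≤ C_T * ω l l'' * ω l'' l')
    (w₁ w₂ : Λ → ℝ) (hw₁ : ∀ l : Λ, 0 < w₁ l) (hw₂ : ∀ l : Λ, 0 < w₂ l)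
    (p₀ K : ℝ) (hp₀ : 0 < p₀) (hp₀1 : p₀ ≤ 1) (hK : 1 ≤ K)
    (C₁ C₂ : ℝ) (hC₁ : 0 < C₁) (hC₂ : 0 < C₂)
    (hadm₁ : ∀ l' : Λ, Summable (fun l : Λ => w₂ l ^ p₀ * ω l l' ^ (-(p₀ * K))) ∧
      ∑' l : Λ, w₂ l ^ p₀ * ω l l' ^ (-(p₀ * K)) ≤ C₁ ^ p₀ * w₁ l' ^ p₀)
    (hadm₂ : ∀ l : Λ, Summable (fun l' : Λ => ω l l' ^ (-K) * (w₁ l')⁻¹) ∧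
      ∑' l' : Λ, ω l l' ^ (-K) * (w₁ l')⁻¹ ≤ C₂ * (w₂ l)⁻¹)
    (N : ℝ) (hNK : K ≤ N)
    (A : Λ → Λ → ℂ) (CA : ℝ) (hCA : 0 ≤ CA)
    (hA : ∀ l l' : Λ, ‖A l l'‖ ≤ CA * ω l l' ^ (-N)) :
    -- boundedness for all finite `p ∈ [p₀,1]`, with some operator norm bound
    (∀ p : ℝ, p₀ ≤ p → p ≤ 1 → ∃ C : ℝ, ∀ a : Λ → ℂ,
      Summable (fun l : Λ => (‖a l‖ * w₁ l) ^ p) →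
        (∀ l : Λ, Summable (fun l' : Λ => A l l' * a l')) ∧
        Summable (fun l : Λ => (‖∑' l' : Λ, A l l' * a l'‖ * w₂ l) ^ p) ∧
        (∑' l : Λ, (‖∑' l' : Λ, A l l' * a l'‖ * w₂ l) ^ p) ^ (1 / p) ≤
          C * (∑' l : Λ, (‖a l‖ * w₁ l) ^ p) ^ (1 / p)) ∧
    -- operator norm at most `C₁ ‖A‖_{𝓑_N}` for `p ∈ (p₀,1]`
    (∀ p : ℝ, p₀ < p → p ≤ 1 → ∀ a : Λ → ℂ,
      Summable (fun l : Λ => (‖a l‖ * w₁ l) ^ p) →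
        (∑' l : Λ, (‖∑' l' : Λ, A l l' * a l'‖ * w₂ l) ^ p) ^ (1 / p) ≤
          C₁ * CA * (∑' l : Λ, (‖a l‖ * w₁ l) ^ p) ^ (1 / p)) ∧
    -- operator norm at most `C₁^{1/p} C₂^{1/p'} ‖A‖_{𝓑_N}` for finite `p ∈ [1,∞)`
    (∀ p : ℝ, 1 ≤ p → ∀ a : Λ → ℂ,
      Summable (fun l : Λ => (‖a l‖ * w₁ l) ^ p) →
        (∀ l : Λ, Summable (fun l' : Λ => A l l' * a l')) ∧
        Summable (fun l : Λ => (‖∑' l' : Λ, A l l' * a l'‖ * w₂ l) ^ p) ∧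
        (∑' l : Λ, (‖∑' l' : Λ, A l l' * a l'‖ * w₂ l) ^ p) ^ (1 / p) ≤
          C₁ ^ (1 / p) * C₂ ^ (1 - 1 / p) * CA *
            (∑' l : Λ, (‖a l‖ * w₁ l) ^ p) ^ (1 / p)) ∧
    -- the case `p = ∞`, with norm `C₂ ‖A‖_{𝓑_N}`
    (∀ a : Λ → ℂ, ∀ Ca : ℝ, (∀ l : Λ, ‖a l‖ * w₁ l ≤ Ca) →
      (∀ l : Λ, Summable (fun l' : Λ => A l l' * a l')) ∧
      ∀ l : Λ, ‖∑' l' : Λ, A l l' * a l'‖ * w₂ l ≤ C₂ * CA * Ca) :=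
  stmt_5_general ω hω1 w₁ w₂ hw₁ hw₂ p₀ K hp₀ hp₀1 C₁ C₂ hC₁ hC₂ hadm₁ hadm₂ N hNK A CA hCA hA
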